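/- arXiv:2111.10456 — 2 statements merged into one kernel-verified Lean document; each statement's English description precedes it below -/
import Mathlib

section
/- For a binary rooted labeled tree S with n leaves, the maximal chains of the lattice of root ancestral configurations of S are in bijection with the labeled histories of S, i.e., the linear extensions of the partial order on the n−1 internal nodes of S given by the ancestor relation. -/
/-- Binary rooted trees (leaf labels abstracted away; leaves are identified
by their positions, encoded as lists of booleans). -/
inductive BTree : Type
  | leaf : BTree
  | node : BTree → BTree → BTree
  deriving DecidableEq

namespace BTree

/-- A position in a binary tree: a path from the root, `false` = left, `true` = right. -/
abbrev Pos := List Bool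

/-- The subtree rooted at a position (junk value `leaf` below a leaf). -/
def subtreeAt : BTree → Pos → BTree
  | t, [] => t
  | leaf, _ :: _ => leaf
  | node l _, false :: p => subtreeAt l p
  | node _ r, true :: p => subtreeAt r p

/-- `p` is a valid position (node) of the tree. -/
def isValidPos : BTree → Pos → Prop
  | _, [] => True
  | leaf, _ :: _ => False
  | node l _, false :: p => isValidPos l p
  | node _ r, true :: p => isValidPos r p

/-- The set of positions of the leaves of a tree. -/
def leafPositions : BTree → Finset Pos
  | leaf => {([] : Pos)}
  | node l r =>
      (leafPositions l).image (false :: ·) ∪ (leafPositions r).image (true :: ·)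

/-- The number of leaves of a tree. -/
def numLeaves (t : BTree) : ℕ := (leafPositions t).card

/-- The set of positions of the internal (non-leaf) nodes of a tree. -/
def internalPos : BTree → Finset Pos
  | leaf => ∅
  | node l r =>
      insert ([] : Pos)
        ((internalPos l).image (false :: ·) ∪ (internalPos r).image (true :: ·))

/-- A root ancestral configuration of `S`: an antichain of non-root nodes of `S`
whose descendant-leaf sets partition the leaf set, i.e. a set of valid non-root
positions such that every leaf position has exactly one weak ancestor in the set. -/
def IsConfig (S : BTree) (A : Finset Pos) : Prop :=
  (∀ p ∈ A, isValidPos S p ∧ p ≠ []) ∧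
  ∀ q ∈ leafPositions S, ∃! p, p ∈ A ∧ p <+: q

/-- The partial order on configurations: `ConfigLE A B` (that is, `A ≺ B`) iff `B`
is obtained from `A` by coalescing some (possibly no) pairs of lineages;
equivalently, every node of `A` is a weak descendant of some node of `B`. -/
def ConfigLE (A B : Finset Pos) : Prop :=
  ∀ p ∈ A, ∃ q ∈ B, q <+: p

/-- The covering relation on root ancestral configurations of `S`. -/
def Covers (S : BTree) (A B : Finset Pos) : Prop :=
  IsConfig S A ∧ IsConfig S B ∧ ConfigLE A B ∧ A ≠ B ∧
  ∀ C, IsConfig S C → ConfigLE A C → ConfigLE C B → C = A ∨ C = B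

/-- The maximal root configuration: the two children of the root. -/
def rootConfig : Finset Pos := {[false], [true]}

/-- The number of root ancestral configurations of `S`. -/
noncomputable def numConfigs (S : BTree) : ℕ := Nat.card {A : Finset Pos // IsConfig S A}

/-- A labeled history of `S`: a linear ordering of the internal nodes of `S`
in which every internal node appears after all of its internal descendants. -/
def IsLabHist (S : BTree) (L : List Pos) : Prop :=
  L.Nodup ∧ (∀ p, p ∈ L ↔ p ∈ internalPos S) ∧
  ∀ i j : Fin L.length, L.get i <+: L.get j → (j : ℕ) ≤ (i : ℕ)

/-- The number of labeled histories of `S`. -/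
noncomputable def numHist (S : BTree) : ℕ := Nat.card {L : List Pos // IsLabHist S L}

/-- The caterpillar tree on `n` leaves (`caterpillar 1` is a single leaf). -/
def caterpillar : ℕ → BTree
  | 0 => leaf
  | 1 => leaf
  | n + 2 => node (caterpillar (n + 1)) leaf

end BTree

/-!
A root ancestral configuration is determined by the set `C` of non-root internal nodes that
have already been coalesced: it is the `frontier` of `C`, made of the leaves and coalesced nodes
whose parent is not coalesced, and the sets `C` that occur are exactly the order ideals of the
poset of non-root internal nodes. A covering step coalesces a node both of whose children are
lineages, i.e. adds one minimal node to `C`. Hence a saturated chain from the leaves to the two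
children of the root is an ordering of the non-root internal nodes in which every node comes
after its internal children, and appending the root gives a labeled history.
-/

namespace BTree

variable {S : BTree} {A B C : Finset Pos} {p q : Pos} {ps L : List Pos}

theorem exists_append_singleton_prefix {α : Type*} {p q : List α} (h : p <+: q) (hne : p ≠ q) :
    ∃ b, p ++ [b] <+: q := by
  obtain ⟨_ | ⟨b, t⟩, rfl⟩ := h
  · simp at hne
  · exact ⟨b, t, by simp⟩

theorem isValidPos_nil (S : BTree) : isValidPos S [] := by
  cases S <;> trivial

theorem isValidPos_of_prefix (hq : isValidPos S q) (h : p <+: q) : isValidPos S p := by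
  obtain ⟨t, rfl⟩ := h
  induction p generalizing S with
  | nil => exact isValidPos_nil S
  | cons b p ih =>
    cases S with
    | leaf => exact hq.elim
    | node l r => cases b <;> exact ih hq

theorem mem_internalPos_iff (b : Bool) : p ∈ internalPos S ↔ isValidPos S (p ++ [b]) := by
  induction S generalizing p with
  | leaf => cases p <;> simp [internalPos, isValidPos]
  | node l r ihl ihr =>
    rcases p with _ | ⟨_ | _, p⟩
    · cases b <;> simp [internalPos, isValidPos, isValidPos_nil]
    · simp [internalPos, isValidPos, ← ihl]
    · simp [internalPos, isValidPos, ← ihr]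

theorem mem_leafPositions_iff :
    q ∈ leafPositions S ↔ isValidPos S q ∧ q ∉ internalPos S := by
  induction S generalizing q with
  | leaf => rcases q with _ | ⟨_, q⟩ <;> simp [leafPositions, internalPos, isValidPos]
  | node l r ihl ihr =>
    rcases q with _ | ⟨_ | _, q⟩
    · simp [leafPositions, internalPos]
    · simp [leafPositions, internalPos, isValidPos, ihl]
    · simp [leafPositions, internalPos, isValidPos, ihr]

theorem exists_mem_leafPositions_prefix (hp : isValidPos S p) :
    ∃ q ∈ leafPositions S, p <+: q := by
  induction S generalizing p with
  | leaf => exact ⟨[], by simp [leafPositions], by cases p <;> simp_all [isValidPos]⟩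
  | node l r ihl ihr =>
    rcases p with _ | ⟨_ | _, p⟩
    · obtain ⟨q, hq, -⟩ := ihl (isValidPos_nil l)
      exact ⟨false :: q, by simp [leafPositions, hq], List.nil_prefix⟩
    · obtain ⟨q, hq, hpq⟩ := ihl hp
      exact ⟨false :: q, by simp [leafPositions, hq], List.cons_prefix_cons.mpr ⟨rfl, hpq⟩⟩
    · obtain ⟨q, hq, hpq⟩ := ihr hp
      exact ⟨true :: q, by simp [leafPositions, hq], List.cons_prefix_cons.mpr ⟨rfl, hpq⟩⟩

theorem eq_of_mem_leafPositions_of_prefix (hp : p ∈ leafPositions S) (hq : isValidPos S q)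
    (h : p <+: q) : p = q := by
  obtain ⟨_ | ⟨b, t⟩, rfl⟩ := h
  · simp
  · rw [mem_leafPositions_iff, mem_internalPos_iff b] at hp
    exact absurd (isValidPos_of_prefix hq (by simp)) hp.2

theorem mem_internalPos_of_append_mem {b : Bool} (h : p ++ [b] ∈ internalPos S) :
    p ∈ internalPos S :=
  (mem_internalPos_iff b).2 (isValidPos_of_prefix ((mem_internalPos_iff b).1 h) (by simp))

theorem nil_mem_internalPos (l r : BTree) : ([] : Pos) ∈ internalPos (node l r) := by
  simp [internalPos]

theorem nil_notMem_leafPositions (l r : BTree) : ([] : Pos) ∉ leafPositions (node l r) := by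
  simp [mem_leafPositions_iff, nil_mem_internalPos]

namespace IsConfig

theorem eq_of_prefix (hA : IsConfig S A) (hp : p ∈ A) (hq : q ∈ A) (h : p <+: q) : p = q := by
  obtain ⟨z, hz, hqz⟩ := exists_mem_leafPositions_prefix (hA.1 q hq).1
  exact (hA.2 z hz).unique ⟨hp, h.trans hqz⟩ ⟨hq, hqz⟩

theorem eq_of_subset (hA : IsConfig S A) (hB : IsConfig S B) (h : A ⊆ B) : A = B := by
  refine h.antisymm fun b hb => ?_
  obtain ⟨z, hz, hbz⟩ := exists_mem_leafPositions_prefix (hB.1 b hb).1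
  obtain ⟨a, ⟨ha, haz⟩, -⟩ := hA.2 z hz
  rwa [(hB.2 z hz).unique ⟨hb, hbz⟩ ⟨h ha, haz⟩]

theorem exists_mem_prefix_of_configLE (hA : IsConfig S A) (hB : IsConfig S B)
    (hAB : ConfigLE A B) (hq : q ∈ B) : ∃ a ∈ A, q <+: a := by
  obtain ⟨z, hz, hqz⟩ := exists_mem_leafPositions_prefix (hB.1 q hq).1
  obtain ⟨a, ⟨ha, haz⟩, -⟩ := hA.2 z hz
  obtain ⟨q', hq', hq'a⟩ := hAB a ha
  rw [(hB.2 z hz).unique ⟨hq, hqz⟩ ⟨hq', hq'a.trans haz⟩]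
  exact ⟨a, ha, hq'a⟩

/-- A deepest member below `q` has its sibling in the configuration as well. -/
theorem exists_siblings_of_prefix (hA : IsConfig S A) {a : Pos} (ha : a ∈ A) (hqa : q <+: a)
    (hq : q ∉ A) : ∃ p, q <+: p ∧ p ++ [false] ∈ A ∧ p ++ [true] ∈ A := by
  obtain ⟨a, haD, hmax⟩ := Finset.exists_max_image (A.filter (q <+: ·)) List.length
    ⟨a, Finset.mem_filter.2 ⟨ha, hqa⟩⟩
  obtain ⟨ha, hqa⟩ := Finset.mem_filter.1 haD
  obtain ⟨c, hc⟩ := exists_append_singleton_prefix hqa (by rintro rfl; exact hq ha)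
  obtain ⟨p, c', rfl⟩ : ∃ p c', a = p ++ [c'] := by
    rcases List.eq_nil_or_concat a with rfl | ⟨p, c', rfl⟩
    · simp at hc
    · exact ⟨p, c', List.concat_eq_append ..⟩
  have hqp : q <+: p := by
    rcases List.prefix_concat_iff.1 ((List.prefix_append q [c]).trans hc) with h | h
    · rw [← h] at ha; exact absurd ha hq
    · exact h
  have hsib : p ++ [!c'] ∈ A := by
    have hv : isValidPos S (p ++ [!c']) :=
      (mem_internalPos_iff _).1 ((mem_internalPos_iff c').2 (hA.1 _ ha).1)
    obtain ⟨z, hz, hsz⟩ := exists_mem_leafPositions_prefix hv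
    obtain ⟨a', ⟨ha', ha'z⟩, -⟩ := hA.2 z hz
    rcases List.prefix_or_prefix_of_prefix ha'z hsz with h | h
    · rcases List.prefix_concat_iff.1 h with rfl | h
      · exact ha'
      · have := hA.eq_of_prefix ha' ha (h.trans (List.prefix_append p [c']))
        subst this
        simpa using h.length_le
    · have hlen :=
        hmax a' (Finset.mem_filter.2 ⟨ha', (hqp.trans (List.prefix_append _ _)).trans h⟩)
      rwa [h.eq_of_length_le (by simpa using hlen)]
  refine ⟨p, hqp, ?_⟩
  cases c' <;> simp_all

end IsConfig

def coalesce (A : Finset Pos) (p : Pos) : Finset Pos :=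
  insert p ((A.erase (p ++ [false])).erase (p ++ [true]))

theorem mem_coalesce :
    q ∈ coalesce A p ↔ q = p ∨ (q ∈ A ∧ q ≠ p ++ [false] ∧ q ≠ p ++ [true]) := by
  simp only [coalesce, Finset.mem_insert, Finset.mem_erase]
  tauto

def IsCoalescence (A : Finset Pos) (p : Pos) : Prop :=
  p ≠ [] ∧ p ++ [false] ∈ A ∧ p ++ [true] ∈ A

theorem IsConfig.notMem_of_isCoalescence (hA : IsConfig S A) (hp : IsCoalescence A p) :
    p ∉ A := fun h => by
  simpa using hA.eq_of_prefix h hp.2.1 (List.prefix_append p [false])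

theorem isConfig_coalesce (hA : IsConfig S A) (hp : IsCoalescence A p) :
    IsConfig S (coalesce A p) := by
  obtain ⟨hp, hp0, hp1⟩ := hp
  refine ⟨fun x hx => ?_, fun z hz => ?_⟩
  · rcases mem_coalesce.1 hx with rfl | ⟨hx, -⟩
    · exact ⟨isValidPos_of_prefix (hA.1 _ hp0).1 (List.prefix_append _ _), hp⟩
    · exact hA.1 x hx
  obtain ⟨a, ⟨ha, haz⟩, hau⟩ := hA.2 z hz
  by_cases hchild : a = p ++ [false] ∨ a = p ++ [true]
  · refine ⟨p, ⟨mem_coalesce.2 (Or.inl rfl), ?_⟩, fun x ⟨hx, hxz⟩ => ?_⟩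
    · rcases hchild with rfl | rfl <;> exact (List.prefix_append _ _).trans haz
    · rcases mem_coalesce.1 hx with rfl | ⟨hx, hx0, hx1⟩
      · rfl
      · rcases hchild with rfl | rfl <;> simp_all
  · push Not at hchild
    refine ⟨a, ⟨mem_coalesce.2 (Or.inr ⟨ha, hchild⟩), haz⟩, fun x ⟨hx, hxz⟩ => ?_⟩
    rcases mem_coalesce.1 hx with rfl | ⟨hx, -⟩
    · have hxz' : x ≠ z := by
        rintro rfl
        simpa using eq_of_mem_leafPositions_of_prefix hz (hA.1 _ hp0).1 (List.prefix_append _ _)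
      obtain ⟨c, hc⟩ := exists_append_singleton_prefix hxz hxz'
      have := hau (x ++ [c]) ⟨by cases c <;> assumption, hc⟩
      cases c <;> simp_all
    · exact hau x ⟨hx, hxz⟩

theorem configLE_coalesce : ConfigLE A (coalesce A p) := fun x hx => by
  by_cases hchild : x = p ++ [false] ∨ x = p ++ [true]
  · exact ⟨p, mem_coalesce.2 (Or.inl rfl), by rcases hchild with rfl | rfl <;> simp⟩
  · push Not at hchild
    exact ⟨x, mem_coalesce.2 (Or.inr ⟨hx, hchild⟩), List.prefix_refl x⟩

/-- Each lineage of `C` is squeezed between a lineage of `A` and its ancestor in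
`coalesce A p`. -/
theorem IsConfig.subset_insert_of_between (hA : IsConfig S A) (hp : IsCoalescence A p)
    (hC : IsConfig S C) (hAC : ConfigLE A C) (hCB : ConfigLE C (coalesce A p)) :
    C ⊆ insert p A := fun c hc => by
  obtain ⟨a, ha, hca⟩ := hA.exists_mem_prefix_of_configLE hC hAC hc
  obtain ⟨b, hb, hbc⟩ := hCB c hc
  have squeeze : ∀ b ∈ A, b <+: c → c ∈ insert p A := fun b hb hbc => by
    have hba := hA.eq_of_prefix hb ha (hbc.trans hca)
    subst hba
    rw [← hbc.eq_of_length_le hca.length_le]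
    exact Finset.mem_insert_of_mem hb
  rcases mem_coalesce.1 hb with rfl | ⟨hb, -⟩
  · by_cases hbc' : b = c
    · exact hbc' ▸ Finset.mem_insert_self b A
    · obtain ⟨x, hx⟩ := exists_append_singleton_prefix hbc hbc'
      exact squeeze _ (by cases x; exacts [hp.2.1, hp.2.2]) hx
  · exact squeeze b hb hbc

theorem IsConfig.covers_coalesce (hA : IsConfig S A) (hp : IsCoalescence A p) :
    Covers S A (coalesce A p) := by
  have hpA := hA.notMem_of_isCoalescence hp
  have hB := isConfig_coalesce hA hp
  refine ⟨hA, hB, configLE_coalesce, fun h => hpA (h ▸ mem_coalesce.2 (Or.inl rfl)),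
    fun C hC hAC hCB => ?_⟩
  have hsub := hA.subset_insert_of_between hp hC hAC hCB
  by_cases hpC : p ∈ C
  · refine Or.inr (hC.eq_of_subset hB fun c hc => ?_)
    rcases Finset.mem_insert.1 (hsub hc) with rfl | hcA
    · exact mem_coalesce.2 (Or.inl rfl)
    · refine mem_coalesce.2 (Or.inr ⟨hcA, ?_, ?_⟩) <;> rintro rfl <;>
        simpa using hC.eq_of_prefix hpC hc (List.prefix_append _ _)
  · refine Or.inl (hC.eq_of_subset hA fun c hc => ?_)
    rcases Finset.mem_insert.1 (hsub hc) with rfl | hcA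
    · exact absurd hc hpC
    · exact hcA

theorem Covers.exists_isCoalescence (h : Covers S A B) :
    ∃ p, IsCoalescence A p ∧ B = coalesce A p := by
  obtain ⟨hA, hB, hAB, hne, hmin⟩ := h
  obtain ⟨q, hqB, hqA⟩ : ∃ q ∈ B, q ∉ A := by
    by_contra! hBA
    exact hne (hB.eq_of_subset hA hBA).symm
  obtain ⟨a, ha, hqa⟩ := hA.exists_mem_prefix_of_configLE hB hAB hqB
  obtain ⟨p, hqp, hp0, hp1⟩ := hA.exists_siblings_of_prefix ha hqa hqA
  have hp : IsCoalescence A p :=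
    ⟨by rintro rfl; exact (hB.1 q hqB).2 (List.prefix_nil.1 hqp), hp0, hp1⟩
  have hLE : ConfigLE (coalesce A p) B := fun x hx => by
    rcases mem_coalesce.1 hx with rfl | ⟨hx, -⟩
    · exact ⟨q, hqB, hqp⟩
    · exact hAB x hx
  refine ⟨p, hp, ?_⟩
  rcases hmin _ (isConfig_coalesce hA hp) configLE_coalesce hLE with h | h
  · exact absurd (h ▸ mem_coalesce.2 (Or.inl rfl)) (hA.notMem_of_isCoalescence hp)
  · exact h.symm

/-- Junk unless `B \ A` is a singleton. -/
noncomputable def coalescedPos (A B : Finset Pos) : Pos := (B \ A).toList.headI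

theorem coalescedPos_coalesce (hp : p ∉ A) : coalescedPos A (coalesce A p) = p := by
  have : coalesce A p \ A = {p} := by
    ext x
    simp only [Finset.mem_sdiff, mem_coalesce, Finset.mem_singleton]
    constructor
    · rintro ⟨rfl | ⟨hx, -⟩, hxA⟩
      · rfl
      · exact absurd hx hxA
    · rintro rfl
      exact ⟨Or.inl rfl, hp⟩
  simp [coalescedPos, this]

theorem Covers.eq_coalesce_coalescedPos (h : Covers S A B) :
    IsCoalescence A (coalescedPos A B) ∧ B = coalesce A (coalescedPos A B) := by
  obtain ⟨p, hp, rfl⟩ := h.exists_isCoalescence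
  rw [coalescedPos_coalesce (h.1.notMem_of_isCoalescence hp)]
  exact ⟨hp, rfl⟩

def IsCoalescenceSeq : Finset Pos → List Pos → Prop
  | _, [] => True
  | A, p :: ps => IsCoalescence A p ∧ IsCoalescenceSeq (coalesce A p) ps

theorem IsConfig.forall_mem_scanl (hA : IsConfig S A) (h : IsCoalescenceSeq A ps) :
    ∀ B ∈ ps.scanl coalesce A, IsConfig S B := by
  induction ps generalizing A with
  | nil => simpa using hA
  | cons p ps ih =>
    simpa [List.scanl_cons, hA] using ih (isConfig_coalesce hA h.1) h.2

theorem IsConfig.isChain_scanl (hA : IsConfig S A) (h : IsCoalescenceSeq A ps) :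
    (ps.scanl coalesce A).IsChain (Covers S) := by
  induction ps generalizing A with
  | nil => simp
  | cons p ps ih =>
    rw [List.scanl_cons, List.isChain_cons, List.head?_scanl]
    exact ⟨by simpa using hA.covers_coalesce h.1, ih (isConfig_coalesce hA h.1) h.2⟩

theorem IsConfig.zipWith_coalescedPos_scanl (hA : IsConfig S A) (h : IsCoalescenceSeq A ps) :
    List.zipWith coalescedPos (ps.scanl coalesce A) (ps.scanl coalesce A).tail = ps := by
  induction ps generalizing A with
  | nil => simp
  | cons p ps ih =>
    have hrest := ih (isConfig_coalesce hA h.1) h.2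
    obtain ⟨t, ht⟩ := List.head?_eq_some_iff.1 (List.head?_scanl (f := coalesce)
      (b := coalesce A p) (l := ps))
    rw [ht, List.tail_cons] at hrest
    rw [List.scanl_cons, ht, List.tail_cons, List.zipWith_cons_cons, hrest,
      coalescedPos_coalesce (hA.notMem_of_isCoalescence h.1)]

theorem scanl_coalescedPos_of_isChain {L : List (Finset Pos)}
    (h : (A :: L).IsChain (Covers S)) :
    IsCoalescenceSeq A (List.zipWith coalescedPos (A :: L) L) ∧
      (List.zipWith coalescedPos (A :: L) L).scanl coalesce A = A :: L := by
  induction L generalizing A with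
  | nil => simp [IsCoalescenceSeq]
  | cons B L ih =>
    obtain ⟨hAB, hL⟩ := List.isChain_cons_cons.1 h
    obtain ⟨hp, hB⟩ := hAB.eq_coalesce_coalescedPos
    obtain ⟨ih₁, ih₂⟩ := ih hL
    rw [List.zipWith_cons_cons, List.scanl_cons, ← hB]
    exact ⟨⟨hp, hB ▸ ih₁⟩, by rw [ih₂]⟩

noncomputable def chainsEquivCoalescenceSeqs (hA : IsConfig S A) (Z : Finset Pos) :
    {L : List (Finset Pos) // (∀ B ∈ L, IsConfig S B) ∧ L.head? = some A ∧
        L.getLast? = some Z ∧ L.IsChain (Covers S)} ≃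
      {ps : List Pos // IsCoalescenceSeq A ps ∧ ps.foldl coalesce A = Z} where
  toFun L := ⟨List.zipWith coalescedPos L.1 L.1.tail, by
    obtain ⟨L, -, hhead, hlast, hchain⟩ := L
    obtain ⟨L, rfl⟩ := List.head?_eq_some_iff.1 hhead
    obtain ⟨hseq, hscan⟩ := scanl_coalescedPos_of_isChain hchain
    refine ⟨hseq, Option.some_injective _ ?_⟩
    dsimp only [List.tail_cons]
    rw [← List.getLast?_scanl, hscan, hlast]⟩
  invFun ps := ⟨ps.1.scanl coalesce A, hA.forall_mem_scanl ps.2.1, List.head?_scanl,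
    by rw [List.getLast?_scanl, ps.2.2], hA.isChain_scanl ps.2.1⟩
  left_inv L := by
    obtain ⟨L, -, hhead, -, hchain⟩ := L
    obtain ⟨L, rfl⟩ := List.head?_eq_some_iff.1 hhead
    exact Subtype.ext (scanl_coalescedPos_of_isChain hchain).2
  right_inv ps := Subtype.ext (hA.zipWith_coalescedPos_scanl ps.2.1)

theorem isConfig_leafPositions (l r : BTree) : IsConfig (node l r) (leafPositions (node l r)) :=
  ⟨fun p hp => ⟨(mem_leafPositions_iff.1 hp).1,
      by rintro rfl; exact nil_notMem_leafPositions l r hp⟩,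
    fun z hz => ⟨z, ⟨hz, List.prefix_refl z⟩, fun p ⟨hp, hpz⟩ =>
      eq_of_mem_leafPositions_of_prefix hp (mem_leafPositions_iff.1 hz).1 hpz⟩⟩

/-- The configuration reached once exactly the nodes of `C` have been coalesced. -/
def frontier (S : BTree) (C : Finset Pos) : Finset Pos :=
  (leafPositions S ∪ C).filter (fun p => p.dropLast ∉ C)

theorem mem_frontier :
    p ∈ frontier S C ↔ (p ∈ leafPositions S ∨ p ∈ C) ∧ p.dropLast ∉ C := by
  simp [frontier]

theorem frontier_empty : frontier S ∅ = leafPositions S := by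
  ext; simp [mem_frontier]

/-- The order ideals of the poset of non-root internal nodes, descendants being below. -/
def IsCoalescedSet (S : BTree) (C : Finset Pos) : Prop :=
  ∀ p ∈ C, p ∈ internalPos S ∧ p ≠ [] ∧
    ∀ b, p ++ [b] ∈ internalPos S → p ++ [b] ∈ C

theorem isCoalescedSet_empty : IsCoalescedSet S ∅ := by
  simp [IsCoalescedSet]

theorem IsCoalescedSet.mem_of_prefix (hC : IsCoalescedSet S C) (hp : p ∈ C)
    (hq : q ∈ internalPos S) (h : p <+: q) : q ∈ C := by
  induction q using List.reverseRecOn with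
  | nil => rwa [List.prefix_nil.1 h] at hp
  | append_singleton q b ih =>
    rcases List.prefix_concat_iff.1 h with rfl | h
    · exact hp
    · exact (hC q (ih (mem_internalPos_of_append_mem hq) h)).2.2 b hq

theorem isCoalescence_frontier_iff (hC : IsCoalescedSet S C) :
    IsCoalescence (frontier S C) p ↔ p ∈ internalPos S ∧ p ≠ [] ∧ p ∉ C ∧
      ∀ b, p ++ [b] ∈ internalPos S → p ++ [b] ∈ C := by
  have hchild : ∀ b, p ++ [b] ∈ frontier S C ↔
      (p ++ [b] ∈ leafPositions S ∨ p ++ [b] ∈ C) ∧ p ∉ C := fun b => by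
    rw [mem_frontier, List.dropLast_concat]
  constructor
  · rintro ⟨hp, h0, h1⟩
    have hpi : p ∈ internalPos S := by
      rcases ((hchild false).1 h0).1 with h | h
      · exact (mem_internalPos_iff false).2 (mem_leafPositions_iff.1 h).1
      · exact mem_internalPos_of_append_mem (hC _ h).1
    refine ⟨hpi, hp, ((hchild false).1 h0).2, fun b hb => ?_⟩
    have := ((hchild b).1 (by cases b; exacts [h0, h1])).1
    exact this.resolve_left fun h => (mem_leafPositions_iff.1 h).2 hb
  · rintro ⟨hpi, hp, hpC, hch⟩
    have hmem : ∀ b, p ++ [b] ∈ frontier S C := fun b => by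
      refine (hchild b).2 ⟨?_, hpC⟩
      by_cases hb : p ++ [b] ∈ internalPos S
      · exact Or.inr (hch b hb)
      · exact Or.inl (mem_leafPositions_iff.2 ⟨(mem_internalPos_iff b).1 hpi, hb⟩)
    exact ⟨hp, hmem false, hmem true⟩

theorem IsCoalescedSet.insert (hC : IsCoalescedSet S C) (hpi : p ∈ internalPos S) (hp : p ≠ [])
    (hch : ∀ b, p ++ [b] ∈ internalPos S → p ++ [b] ∈ C) :
    IsCoalescedSet S (insert p C) := by
  intro q hq
  rcases Finset.mem_insert.1 hq with rfl | hq
  · exact ⟨hpi, hp, fun b hb => Finset.mem_insert_of_mem (hch b hb)⟩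
  · obtain ⟨hqi, hq0, hqch⟩ := hC q hq
    exact ⟨hqi, hq0, fun b hb => Finset.mem_insert_of_mem (hqch b hb)⟩

theorem coalesce_frontier (hC : IsCoalescedSet S C) (hp : IsCoalescence (frontier S C) p) :
    coalesce (frontier S C) p = frontier S (insert p C) := by
  obtain ⟨hpi, hp, hpC, -⟩ := (isCoalescence_frontier_iff hC).1 hp
  ext x
  rw [mem_coalesce, mem_frontier, mem_frontier, Finset.mem_insert, Finset.mem_insert]
  rcases List.eq_nil_or_concat x with rfl | ⟨y, c, rfl⟩
  · have : ([] : Pos) ∉ C := fun h => (hC _ h).2.1 rfl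
    simp [this, hp.symm]
  · rw [List.concat_eq_append, List.dropLast_concat]
    have hparent : y ++ [c] = p → y ≠ p ∧ y ∉ C := by
      rintro rfl
      exact ⟨by simp, fun hy => hpC ((hC y hy).2.2 c hpi)⟩
    constructor
    · rintro (h | ⟨⟨h, hy⟩, h0, h1⟩)
      · exact ⟨Or.inr (Or.inl h), not_or.2 (hparent h)⟩
      · refine ⟨by tauto, not_or.2 ⟨?_, hy⟩⟩
        rintro rfl
        cases c <;> simp_all
    · rintro ⟨h, hy⟩
      rw [not_or] at hy
      by_cases hx : y ++ [c] = p
      · exact Or.inl hx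
      · exact Or.inr ⟨⟨by tauto, hy.2⟩, by simp [hy.1], by simp [hy.1]⟩

theorem isCoalescenceSeq_frontier_iff (hC : IsCoalescedSet S C) :
    IsCoalescenceSeq (frontier S C) ps ↔
      ps.Pairwise (fun p q => ¬ p <+: q) ∧ (∀ p ∈ ps, p ∉ C) ∧
        IsCoalescedSet S (C ∪ ps.toFinset) := by
  induction ps generalizing C with
  | nil => simpa [IsCoalescenceSeq] using hC
  | cons p ps ih =>
    have hset : C ∪ (p :: ps).toFinset = insert p C ∪ ps.toFinset := by
      rw [List.toFinset_cons, Finset.union_insert, Finset.insert_union]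
    simp only [IsCoalescenceSeq, List.pairwise_cons, List.mem_cons, forall_eq_or_imp, hset]
    constructor
    · rintro ⟨hp, hps⟩
      obtain ⟨hpi, hp0, hpC, hch⟩ := (isCoalescence_frontier_iff hC).1 hp
      have hC' := hC.insert hpi hp0 hch
      rw [coalesce_frontier hC hp, ih hC'] at hps
      obtain ⟨hpw, hnot, hset'⟩ := hps
      have hint : ∀ q ∈ ps, q ∈ internalPos S := fun q hq =>
        (hset' q (Finset.mem_union_right _ (List.mem_toFinset.2 hq))).1
      refine ⟨⟨fun q hq hpq => hnot q hq ?_, hpw⟩,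
        ⟨hpC, fun q hq hqC => hnot q hq (Finset.mem_insert_of_mem hqC)⟩, hset'⟩
      exact hC'.mem_of_prefix (Finset.mem_insert_self p C) (hint q hq) hpq
    · rintro ⟨⟨hpq, hpw⟩, ⟨hpC, hnot⟩, hset'⟩
      obtain ⟨hpi, hp0, hch⟩ := hset' p (Finset.mem_union_left _ (Finset.mem_insert_self p C))
      have hchC : ∀ b, p ++ [b] ∈ internalPos S → p ++ [b] ∈ C := fun b hb => by
        rcases Finset.mem_union.1 (hch b hb) with h | h
        · exact (Finset.mem_insert.1 h).resolve_left (by simp)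
        · exact absurd (List.prefix_append p [b]) (hpq _ (List.mem_toFinset.1 h))
      have hp := (isCoalescence_frontier_iff hC).2 ⟨hpi, hp0, hpC, hchC⟩
      have hC' := hC.insert hpi hp0 hchC
      refine ⟨hp, ?_⟩
      rw [coalesce_frontier hC hp, ih hC']
      refine ⟨hpw, fun q hq hqC => ?_, hset'⟩
      rcases Finset.mem_insert.1 hqC with rfl | hqC
      · exact hpq q hq (List.prefix_refl q)
      · exact hnot q hq hqC

theorem foldl_coalesce_frontier (hC : IsCoalescedSet S C)
    (h : IsCoalescenceSeq (frontier S C) ps) :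
    ps.foldl coalesce (frontier S C) = frontier S (C ∪ ps.toFinset) := by
  induction ps generalizing C with
  | nil => simp
  | cons p ps ih =>
    obtain ⟨hpi, hp0, -, hch⟩ := (isCoalescence_frontier_iff hC).1 h.1
    have h' := h.2
    rw [coalesce_frontier hC h.1] at h'
    rw [List.foldl_cons, coalesce_frontier hC h.1, ih (hC.insert hpi hp0 hch) h',
      List.toFinset_cons, Finset.union_insert, Finset.insert_union]

variable {l r : BTree}

/-- A deepest non-root internal node outside `C` would have its left child in the frontier. -/
theorem mem_of_frontier_eq_rootConfig (h : frontier (node l r) C = rootConfig)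
    (hp : p ∈ internalPos (node l r)) (hp0 : p ≠ []) :
    p ∈ C := by
  by_contra hpC
  obtain ⟨p, hpD, hmax⟩ := Finset.exists_max_image
    ((internalPos (node l r)).filter fun p => p ≠ [] ∧ p ∉ C) List.length
    ⟨p, Finset.mem_filter.2 ⟨hp, hp0, hpC⟩⟩
  simp only [Finset.mem_filter] at hpD hmax
  obtain ⟨hpi, hp0, hpC⟩ := hpD
  have hmem : p ++ [false] ∈ frontier (node l r) C := by
    refine mem_frontier.2 ⟨?_, by rwa [List.dropLast_concat]⟩
    by_cases hi : p ++ [false] ∈ internalPos (node l r)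
    · by_contra! hout
      simpa using hmax _ ⟨hi, by simp, hout.2⟩
    · exact Or.inl (mem_leafPositions_iff.2 ⟨(mem_internalPos_iff false).1 hpi, hi⟩)
  rw [h] at hmem
  simp only [rootConfig, Finset.mem_insert, Finset.mem_singleton, List.append_eq_cons_iff,
    hp0] at hmem
  simp_all

theorem IsCoalescedSet.frontier_eq_rootConfig (hC : IsCoalescedSet (node l r) C)
    (h : ∀ p ∈ internalPos (node l r), p ≠ [] → p ∈ C) :
    frontier (node l r) C = rootConfig := by
  have hnil : ([] : Pos) ∉ C := fun h => (hC _ h).2.1 rfl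
  ext x
  rw [mem_frontier]
  rcases List.eq_nil_or_concat x with rfl | ⟨y, c, rfl⟩
  · simp [nil_notMem_leafPositions, hnil, rootConfig]
  rw [List.concat_eq_append, List.dropLast_concat]
  have hroot : y ++ [c] ∈ rootConfig ↔ y = [] := by
    cases c <;> simp [rootConfig, List.append_eq_singleton_iff]
  rw [hroot]
  constructor
  · rintro ⟨hyc, hyC⟩
    have hyi : y ∈ internalPos (node l r) := by
      rcases hyc with hyc | hyc
      · exact (mem_internalPos_iff c).2 (mem_leafPositions_iff.1 hyc).1
      · exact mem_internalPos_of_append_mem (hC _ hyc).1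
    by_contra hy
    exact hyC (h y hyi hy)
  · rintro rfl
    refine ⟨?_, hnil⟩
    by_cases hi : [c] ∈ internalPos (node l r)
    · exact Or.inr (h _ hi (List.cons_ne_nil c []))
    · exact Or.inl (mem_leafPositions_iff.2 ⟨by cases c <;> exact isValidPos_nil _, hi⟩)

theorem isLabHist_iff :
    IsLabHist S L ↔
      L.Pairwise (fun p q => ¬ p <+: q) ∧ ∀ p, p ∈ L ↔ p ∈ internalPos S := by
  have hpw : L.Pairwise (fun p q => ¬ p <+: q) ↔
      ∀ i j : Fin L.length, L.get i <+: L.get j → (j : ℕ) ≤ i := by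
    rw [List.pairwise_iff_getElem]
    constructor
    · intro h i j hij
      by_contra! hlt
      exact h i j i.2 j.2 hlt hij
    · intro h i j hi hj hij hpre
      exact absurd (h ⟨i, hi⟩ ⟨j, hj⟩ hpre) (not_le.2 hij)
  constructor
  · rintro ⟨-, hmem, hord⟩
    exact ⟨hpw.2 hord, hmem⟩
  · rintro ⟨hord, hmem⟩
    exact ⟨hord.imp fun h e => h (by rw [e]), hmem, hpw.1 hord⟩

theorem IsLabHist.dropLast_append_nil (h : IsLabHist (node l r) L) : L.dropLast ++ [[]] = L := by
  obtain ⟨hpw, hmem⟩ := isLabHist_iff.1 h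
  have hL : L ≠ [] := List.ne_nil_of_mem ((hmem []).2 (nil_mem_internalPos l r))
  have hlast : L.getLast hL = [] := by
    by_contra hne
    rw [← List.dropLast_append_getLast hL, List.pairwise_append] at hpw
    have hnil : [] ∈ L.dropLast := by
      have := (hmem []).2 (nil_mem_internalPos l r)
      rw [← List.dropLast_append_getLast hL, List.mem_append, List.mem_singleton] at this
      exact this.resolve_right (Ne.symm hne)
    exact hpw.2.2 [] hnil _ (List.mem_singleton_self _) List.nil_prefix
  conv_rhs => rw [← List.dropLast_append_getLast hL, hlast]

theorem foldl_coalesce_leafPositions_eq_rootConfig_iff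
    (hpw : ps.Pairwise (fun p q => ¬ p <+: q)) (hset : IsCoalescedSet (node l r) ps.toFinset) :
    ps.foldl coalesce (leafPositions (node l r)) = rootConfig ↔
      ∀ p ∈ internalPos (node l r), p ≠ [] → p ∈ ps := by
  have hseq := (isCoalescenceSeq_frontier_iff isCoalescedSet_empty).2
    ⟨hpw, by simp, by simpa using hset⟩
  rw [← frontier_empty, foldl_coalesce_frontier isCoalescedSet_empty hseq, Finset.empty_union]
  exact ⟨fun h p hp hp0 => List.mem_toFinset.1 (mem_of_frontier_eq_rootConfig h hp hp0),
    fun h => hset.frontier_eq_rootConfig fun p hp hp0 => List.mem_toFinset.2 (h p hp hp0)⟩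

theorem isLabHist_append_nil_iff :
    IsLabHist (node l r) (ps ++ [[]]) ↔
      IsCoalescenceSeq (leafPositions (node l r)) ps ∧
        ps.foldl coalesce (leafPositions (node l r)) = rootConfig := by
  rw [isLabHist_iff, ← frontier_empty, isCoalescenceSeq_frontier_iff isCoalescedSet_empty,
    frontier_empty]
  simp only [List.pairwise_append, List.pairwise_singleton, List.mem_singleton, forall_eq,
    List.prefix_nil, Finset.notMem_empty, not_false_eq_true, implies_true, true_and,
    Finset.empty_union, List.mem_append]
  constructor
  · rintro ⟨⟨hpw, hne⟩, hmem⟩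
    have hset : IsCoalescedSet (node l r) ps.toFinset := fun p hp => by
      rw [List.mem_toFinset] at hp
      refine ⟨(hmem p).1 (Or.inl hp), hne p hp, fun b hb => ?_⟩
      exact List.mem_toFinset.2 (((hmem _).2 hb).resolve_right (by simp))
    refine ⟨⟨hpw, hset⟩, (foldl_coalesce_leafPositions_eq_rootConfig_iff hpw hset).2 ?_⟩
    exact fun p hp hp0 => ((hmem p).2 hp).resolve_right hp0
  · rintro ⟨⟨hpw, hset⟩, hfold⟩
    have hfull := (foldl_coalesce_leafPositions_eq_rootConfig_iff hpw hset).1 hfold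
    refine ⟨⟨hpw, fun p hp => (hset p (List.mem_toFinset.2 hp)).2.1⟩,
      fun p => ⟨?_, fun hp => ?_⟩⟩
    · rintro (hp | rfl)
      · exact (hset p (List.mem_toFinset.2 hp)).1
      · exact nil_mem_internalPos l r
    · by_cases hp0 : p = []
      · exact Or.inr hp0
      · exact Or.inl (hfull p hp hp0)

def coalescenceSeqsEquivLabHists (l r : BTree) :
    {ps : List Pos // IsCoalescenceSeq (leafPositions (node l r)) ps ∧
        ps.foldl coalesce (leafPositions (node l r)) = rootConfig} ≃
      {L : List Pos // IsLabHist (node l r) L} where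
  toFun ps := ⟨ps.1 ++ [[]], isLabHist_append_nil_iff.2 ps.2⟩
  invFun L := ⟨L.1.dropLast, isLabHist_append_nil_iff.1 (L.2.dropLast_append_nil.symm ▸ L.2)⟩
  left_inv _ := Subtype.ext List.dropLast_concat
  right_inv L := Subtype.ext L.2.dropLast_append_nil

end BTree

open BTree

/-- The maximal chains of the lattice of root ancestral configurations of a binary
rooted tree (saturated chains from the all-leaves configuration to the
two-children-of-the-root configuration) are in bijection with the labeled
histories of the tree (linear extensions of the poset of internal nodes). -/
theorem maximal_chains_equiv_labeled_histories (l r : BTree) :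
    Nonempty
      ({L : List (Finset Pos) //
          (∀ A ∈ L, IsConfig (node l r) A) ∧
          L.head? = some (leafPositions (node l r)) ∧
          L.getLast? = some rootConfig ∧
          L.Chain' (Covers (node l r))} ≃
        {L : List Pos // IsLabHist (node l r) L}) :=
  ⟨(chainsEquivCoalescenceSeqs (isConfig_leafPositions l r) rootConfig).trans
    (coalescenceSeqsEquivLabHists l r)⟩
end

section
/- For the fully balanced binary tree B_n of depth n ≥ 2, the number of labeled histories equals (2^n − 2)! divided by the product over k from 1 to n−2 of (2^{n−k} − 1)^{2^k}. -/
open BTree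

/-- The fully balanced binary tree of depth `n`, with `2^n` leaves. -/
def balanced : ℕ → BTree
  | 0 => BTree.leaf
  | n + 1 => node (balanced n) (balanced n)

/-!
A labeled history of `node l r` must end with the root, and what precedes it is an arbitrary
interleaving of labeled histories of `l` and `r`. With `a`, `b` the numbers of internal nodes of
`l` and `r`, this gives `numHist (node l r) = C(a + b, a) · numHist l · numHist r`, and by
induction the hook-length formula `numHist t · ∏_v (λ(v) - 1) = (m - 1)!` for a tree with `m`
leaves. For `B_n` the product is `∏_{k < n} (2^(n-k) - 1)^(2^k)`: its `k = 0` factor `2^n - 1`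
cancels against `(2^n - 1)!`, and its `k = n - 1` factor is `1`.
-/

section BoolLists

open List

theorem count_eq_zero_and_count_eq_iff {c d : Bool} (hcd : c ≠ d) {m : ℕ} {v : List Bool} :
    v.count c = 0 ∧ v.count d = m ↔ v = replicate m d := by
  constructor
  · rintro ⟨hc, rfl⟩
    refine eq_replicate_iff.mpr ⟨?_, fun e he => ?_⟩
    · have := count_false_add_count_true v
      cases c <;> cases d <;> simp_all
    · have hec : e ≠ c := fun h => count_eq_zero.mp hc (h ▸ he)
      cases c <;> cases d <;> cases e <;> simp_all
  · rintro rfl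
    simp [count_replicate, hcd.symm]

instance finite_boolList_count (a b : ℕ) :
    Finite {v : List Bool // v.count false = a ∧ v.count true = b} :=
  Set.Finite.to_subtype <| (finite_length_eq Bool (a + b)).subset fun v hv => by
    simp [← count_false_add_count_true, hv.1, hv.2]

def boolListConsEquiv (a b : ℕ) :
    {w : List Bool // w.count false = a ∧ w.count true = b + 1} ⊕
        {w : List Bool // w.count false = a + 1 ∧ w.count true = b} ≃
      {v : List Bool // v.count false = a + 1 ∧ v.count true = b + 1} where
  toFun := Sum.elim (fun w => ⟨false :: w.1, by simpa using w.2⟩)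
    (fun w => ⟨true :: w.1, by simpa using w.2⟩)
  invFun
    | ⟨false :: w, h⟩ => .inl ⟨w, by simpa using h⟩
    | ⟨true :: w, h⟩ => .inr ⟨w, by simpa using h⟩
    | ⟨[], h⟩ => absurd h.1 (by simp)
  left_inv := by rintro (_ | _) <;> rfl
  right_inv := by rintro ⟨_ | ⟨_ | _, _⟩, h⟩ <;> first | rfl | simp at h

theorem card_boolList_count_eq :
    ∀ a b : ℕ, Nat.card {v : List Bool // v.count false = a ∧ v.count true = b} =
      (a + b).choose a
  | 0, b => by
    rw [Nat.card_congr (Equiv.subtypeEquivRight fun v : List Bool =>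
      count_eq_zero_and_count_eq_iff (by decide))]
    simp
  | a + 1, 0 => by
    rw [Nat.card_congr (Equiv.subtypeEquivRight fun v : List Bool =>
      and_comm.trans (count_eq_zero_and_count_eq_iff (by decide)))]
    simp
  | a + 1, b + 1 => by
    rw [← Nat.card_congr (boolListConsEquiv a b), Nat.card_sum, card_boolList_count_eq a (b + 1),
      card_boolList_count_eq (a + 1) b, show a + 1 + (b + 1) = (a + b + 1) + 1 by ring,
      Nat.choose_succ_succ']
    ring_nf

end BoolLists

namespace BTree

open List

theorem isLabHist_iff_pairwise {S : BTree} {L : List Pos} :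
    IsLabHist S L ↔ L.Nodup ∧ (∀ p, p ∈ L ↔ p ∈ internalPos S) ∧
      L.Pairwise fun a b => ¬ a <+: b := by
  refine and_congr_right fun _ => and_congr_right fun _ => ?_
  rw [List.pairwise_iff_get]
  exact ⟨fun h i j hij hpre => (h i j hpre).not_gt hij,
    fun h i j hpre => not_lt.mp fun hij => h i j hij hpre⟩

theorem nil_mem_internalPos_node {l r : BTree} : [] ∈ internalPos (node l r) := by
  simp [internalPos]

theorem cons_mem_internalPos_node {l r : BTree} {b : Bool} {q : Pos} :
    b :: q ∈ internalPos (node l r) ↔ q ∈ internalPos (bif b then r else l) := by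
  cases b <;> simp [internalPos]

theorem card_internalPos_node (l r : BTree) :
    (internalPos (node l r)).card = (internalPos l).card + (internalPos r).card + 1 := by
  rw [internalPos, Finset.card_insert_of_notMem (by simp), Finset.card_union_of_disjoint,
    Finset.card_image_of_injective _ cons_injective,
    Finset.card_image_of_injective _ cons_injective]
  simp [Finset.disjoint_left]

theorem IsLabHist.length_eq {S : BTree} {L : List Pos} (h : IsLabHist S L) :
    L.length = (internalPos S).card := by
  classical
  rw [← toFinset_card_of_nodup h.1]
  congr 1
  ext p
  simp [h.2.1 p]

theorem numHist_leaf : numHist leaf = 1 := by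
  have hnil : ∀ L, IsLabHist leaf L ↔ L = [] := fun L =>
    ⟨fun h => eq_nil_iff_forall_not_mem.mpr fun p hp => by
        simpa [internalPos] using (h.2.1 p).mp hp,
      by rintro rfl; simp [isLabHist_iff_pairwise, internalPos]⟩
  rw [numHist, Nat.card_congr (Equiv.subtypeEquivRight hnil)]
  simp

theorem IsLabHist.eq_append_root {l r : BTree} {L : List Pos} (h : IsLabHist (node l r) L) :
    ∃ M, [] ∉ M ∧ L = M ++ [[]] := by
  obtain ⟨hnd, hmem, hpw⟩ := isLabHist_iff_pairwise.mp h
  obtain ⟨M, N, rfl⟩ := append_of_mem ((hmem []).mpr nil_mem_internalPos_node)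
  obtain rfl : N = [] := by
    rw [pairwise_append, pairwise_cons] at hpw
    exact eq_nil_iff_forall_not_mem.mpr fun p hp => hpw.2.1.1 p hp nil_prefix
  exact ⟨M, fun hM => (nodup_append.mp hnd).2.2 _ hM _ mem_cons_self rfl, rfl⟩

def branchPart (b : Bool) (L : List Pos) : List Pos :=
  L.filterMap fun p => if p.head? = some b then some p.tail else none

theorem mem_branchPart {b : Bool} {L : List Pos} {q : Pos} :
    q ∈ branchPart b L ↔ b :: q ∈ L := by
  simp only [branchPart, mem_filterMap, Option.ite_none_right_eq_some, Option.some.injEq]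
  constructor
  · rintro ⟨_ | ⟨c, p⟩, hp, hb, rfl⟩ <;> simp_all
  · exact fun h => ⟨b :: q, h, rfl, rfl⟩

theorem pairwise_iff_forall_branchPart {R : Pos → Pos → Prop}
    (hcross : ∀ b c p q, b ≠ c → R (b :: p) (c :: q)) {M : List Pos} (hM : [] ∉ M) :
    M.Pairwise R ↔ ∀ b, (branchPart b M).Pairwise fun p q => R (b :: p) (b :: q) := by
  simp only [branchPart, pairwise_filterMap, Bool.forall_bool, ← pairwise_and_iff]
  refine Pairwise.iff_of_mem fun {p q} hp hq => ?_
  obtain ⟨b, p, rfl⟩ := exists_cons_of_ne_nil (ne_of_mem_of_not_mem hp hM)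
  obtain ⟨c, q, rfl⟩ := exists_cons_of_ne_nil (ne_of_mem_of_not_mem hq hM)
  by_cases hbc : b = c
  · subst hbc; cases b <;> simp
  · simp only [hcross b c p q hbc, true_iff]
    cases b <;> cases c <;> simp_all

theorem isLabHist_node_iff {l r : BTree} {M : List Pos} (hM : [] ∉ M) :
    IsLabHist (node l r) (M ++ [[]]) ↔
      ∀ b, IsLabHist (bif b then r else l) (branchPart b M) := by
  have hne : ∀ a ∈ M, a ≠ [] := fun a ha => ne_of_mem_of_not_mem ha hM
  have hnodup : (M ++ [[]]).Nodup ↔ ∀ b, (branchPart b M).Nodup := by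
    rw [nodup_append, Nodup, pairwise_iff_forall_branchPart (by simp_all) hM]
    simp_all
  have hmem : (∀ p, p ∈ M ++ [[]] ↔ p ∈ internalPos (node l r)) ↔
      ∀ b q, q ∈ branchPart b M ↔ q ∈ internalPos (bif b then r else l) := by
    simp only [mem_branchPart, ← cons_mem_internalPos_node (l := l) (r := r)]
    refine ⟨fun h b q => by simpa using h (b :: q), fun h p => ?_⟩
    rcases p with _ | ⟨b, q⟩
    · simp [nil_mem_internalPos_node]
    · simpa using h b q
  have hpairwise : (M ++ [[]]).Pairwise (fun a b => ¬ a <+: b) ↔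
      ∀ b, (branchPart b M).Pairwise fun p q => ¬ p <+: q := by
    rw [pairwise_append, pairwise_iff_forall_branchPart (by simp_all [cons_prefix_cons]) hM]
    simp_all [cons_prefix_cons]
  simp only [isLabHist_iff_pairwise, hnodup, hmem, hpairwise, forall_and]

def interleave : List Bool → List Pos → List Pos → List Pos
  | [], _, _ => []
  | false :: v, x :: xs, ys => (false :: x) :: interleave v xs ys
  | false :: _, [], _ => []
  | true :: v, xs, y :: ys => (true :: y) :: interleave v xs ys
  | true :: _, _, [] => []

theorem nil_not_mem_interleave (v : List Bool) (xs ys : List Pos) :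
    [] ∉ interleave v xs ys := by
  fun_induction interleave <;> simp_all

section
variable {v : List Bool} {xs ys : List Pos}

theorem map_headI_interleave (hx : xs.length = v.count false) (hy : ys.length = v.count true) :
    (interleave v xs ys).map (·.headI) = v := by
  fun_induction interleave v xs ys <;> simp_all

theorem branchPart_interleave (hx : xs.length = v.count false) (hy : ys.length = v.count true)
    (b : Bool) : branchPart b (interleave v xs ys) = bif b then ys else xs := by
  fun_induction interleave v xs ys <;> cases b <;> simp_all [branchPart]

end

theorem interleave_map_headI_branchPart {M : List Pos} (hM : [] ∉ M) :
    interleave (M.map (·.headI)) (branchPart false M) (branchPart true M) = M := by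
  induction M with
  | nil => rfl
  | cons p M ih =>
    obtain ⟨b, q, rfl⟩ := exists_cons_of_ne_nil (ne_of_not_mem_cons hM).symm
    cases b <;> simp_all [branchPart, interleave]

theorem count_map_headI {M : List Pos} (hM : [] ∉ M) (b : Bool) :
    (M.map (·.headI)).count b = (branchPart b M).length := by
  induction M with
  | nil => rfl
  | cons p M ih =>
    obtain ⟨c, q, rfl⟩ := exists_cons_of_ne_nil (ne_of_not_mem_cons hM).symm
    cases b <;> cases c <;> simp_all [branchPart]

def labHistNodeEquiv (l r : BTree) :
    {L // IsLabHist (node l r) L} ≃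
      {M : List Pos // [] ∉ M ∧ ∀ b, IsLabHist (bif b then r else l) (branchPart b M)} where
  toFun L := ⟨L.1.dropLast, by
    obtain ⟨M, hM, hL⟩ := L.2.eq_append_root
    rw [hL, dropLast_concat]
    exact ⟨hM, (isLabHist_node_iff hM).mp (hL ▸ L.2)⟩⟩
  invFun M := ⟨M.1 ++ [[]], (isLabHist_node_iff M.2.1).mpr M.2.2⟩
  left_inv L := by
    obtain ⟨M, -, hL⟩ := L.2.eq_append_root
    exact Subtype.ext (by simp [hL])
  right_inv M := Subtype.ext dropLast_concat

def interleaveEquiv (l r : BTree) :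
    {M : List Pos // [] ∉ M ∧ ∀ b, IsLabHist (bif b then r else l) (branchPart b M)} ≃
      {v : List Bool // v.count false = (internalPos l).card ∧
          v.count true = (internalPos r).card} ×
        {x // IsLabHist l x} × {y // IsLabHist r y} where
  toFun M :=
    (⟨M.1.map (·.headI), by
        simp only [count_map_headI M.2.1, (M.2.2 _).length_eq, cond_false, cond_true,
          and_self]⟩,
      ⟨branchPart false M.1, M.2.2 false⟩, ⟨branchPart true M.1, M.2.2 true⟩)
  invFun t := ⟨interleave t.1 t.2.1 t.2.2, nil_not_mem_interleave _ _ _, fun b => by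
    rw [branchPart_interleave (t.2.1.2.length_eq.trans t.1.2.1.symm)
      (t.2.2.2.length_eq.trans t.1.2.2.symm)]
    cases b
    exacts [t.2.1.2, t.2.2.2]⟩
  left_inv M := Subtype.ext (interleave_map_headI_branchPart M.2.1)
  right_inv t := by
    have hx := t.2.1.2.length_eq.trans t.1.2.1.symm
    have hy := t.2.2.2.length_eq.trans t.1.2.2.symm
    ext1
    · exact Subtype.ext (map_headI_interleave hx hy)
    ext1
    · exact Subtype.ext (branchPart_interleave hx hy false)
    · exact Subtype.ext (branchPart_interleave hx hy true)

theorem numHist_node (l r : BTree) :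
    numHist (node l r) =
      ((internalPos l).card + (internalPos r).card).choose (internalPos l).card *
        (numHist l * numHist r) := by
  rw [numHist, Nat.card_congr ((labHistNodeEquiv l r).trans (interleaveEquiv l r)),
    Nat.card_prod, Nat.card_prod, card_boolList_count_eq, numHist, numHist]

open scoped Nat

/-- `∏ (λ(v) - 1)` over the internal nodes `v`, where `λ(v)` is the number of leaves below `v`
(the subtree at `v` has `λ(v) - 1` internal nodes); nodes with `λ(v) = 2` contribute `1`. -/
def hookProd : BTree → ℕ
  | leaf => 1
  | node l r => (internalPos (node l r)).card * hookProd l * hookProd r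

theorem numHist_mul_hookProd (t : BTree) : numHist t * hookProd t = (internalPos t).card ! := by
  induction t with
  | leaf => simp [numHist_leaf, hookProd, internalPos]
  | node l r ihl ihr =>
    set a := (internalPos l).card
    set b := (internalPos r).card
    calc numHist (node l r) * hookProd (node l r)
        = (a + b + 1) *
            ((a + b).choose b * (numHist l * hookProd l) * (numHist r * hookProd r)) := by
          rw [numHist_node, hookProd, card_internalPos_node, Nat.choose_symm_add]
          ring
      _ = (internalPos (node l r)).card ! := by
          rw [ihl, ihr, Nat.add_choose_mul_factorial_mul_factorial,
            card_internalPos_node, Nat.factorial_succ]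

end BTree

theorem card_internalPos_balanced (n : ℕ) : (internalPos (balanced n)).card = 2 ^ n - 1 := by
  induction n with
  | zero => rfl
  | succ n ih =>
    rw [balanced, card_internalPos_node, ih, pow_succ]
    have := n.one_le_two_pow
    omega

theorem hookProd_balanced (n : ℕ) :
    hookProd (balanced n) = ∏ k ∈ Finset.range n, (2 ^ (n - k) - 1) ^ 2 ^ k := by
  induction n with
  | zero => rfl
  | succ n ih =>
    rw [balanced, hookProd, ← balanced, card_internalPos_balanced, Finset.prod_range_succ', ih,
      mul_assoc, ← sq, ← Finset.prod_pow]
    simp only [Nat.add_sub_add_right, pow_succ, pow_mul, Nat.sub_zero, pow_zero, pow_one]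
    ring

open scoped Nat in
/-- For the fully balanced tree `B_n` of depth `n ≥ 2`, the number of labeled
histories equals `(2^n - 2)!` divided by the product over `k` from `1` to `n-2`
of `(2^{n-k} - 1)^{2^k}`. -/
theorem balanced_numHist (n : ℕ) (hn : 2 ≤ n) :
    numHist (balanced n) =
      (2 ^ n - 2)! / ∏ k ∈ Finset.Icc 1 (n - 2), (2 ^ (n - k) - 1) ^ (2 ^ k) := by
  obtain ⟨m, rfl⟩ : ∃ m, n = m + 2 := ⟨n - 2, by omega⟩
  set D := ∏ k ∈ Finset.Icc 1 (m + 2 - 2), (2 ^ (m + 2 - k) - 1) ^ 2 ^ k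
  have hhook : hookProd (balanced (m + 2)) = (2 ^ (m + 2) - 1) * D := by
    rw [hookProd_balanced, Finset.prod_range_succ, Finset.range_eq_Ico,
      Finset.prod_eq_prod_Ico_succ_bot (by omega), Finset.Ico_add_one_right_eq_Icc]
    simp [D]
  have hpos : 0 < 2 ^ (m + 2) - 1 := Nat.sub_pos_of_lt (Nat.one_lt_two_pow (by simp))
  have hfact : (2 ^ (m + 2) - 1)! = (2 ^ (m + 2) - 1) * (2 ^ (m + 2) - 2)! := by
    rw [← Nat.mul_factorial_pred hpos.ne']
    rfl
  have hmul : numHist (balanced (m + 2)) * D = (2 ^ (m + 2) - 2)! := by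
    have := numHist_mul_hookProd (balanced (m + 2))
    rw [hhook, card_internalPos_balanced, hfact, mul_left_comm] at this
    exact Nat.eq_of_mul_eq_mul_left hpos this
  have hD : 0 < D := Nat.pos_of_ne_zero (right_ne_zero_of_mul (hmul ▸ Nat.factorial_ne_zero _))
  exact (Nat.div_eq_of_eq_mul_left hD hmul.symm).symm
end
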